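/- arXiv:2005.04735 — 2 statements merged into one kernel-verified Lean document; each statement's English description precedes it below -/
import Mathlib

section
/- Density of a composed stochastic process: let (Ωₘ, μₘ) and (Ωₙ, μₙ) be probability spaces, f : Ωₙ × ℝ^a → ℝ^b and f' : Ωₘ × ℝ^b → ℝ^c jointly measurable, and fix x ∈ ℝ^a. Suppose there is a measurable L : ℝ^b → [0,∞] with (f(·,x))_*μₙ = λ^b.withDensity L, and a jointly measurable L' : ℝ^b × ℝ^c → [0,∞] such that for every x_b ∈ ℝ^b, (f'(·,x_b))_*μₘ = λ^c.withDensity (L'(x_b, ·)). Then the pushforward of μₘ ⊗ μₙ along the map (ωₘ, ωₙ) ↦ f'(ωₘ, f(ωₙ, x)) equals λ^c.withDensity (x_c ↦ ∫⁻_{x_b ∈ ℝ^b} L'(x_b, x_c) · L(x_b) dλ^b). (The Radon–Nikodym derivative of a composed model is the composition of the conditional likelihoods; semifunctoriality of RN_μ.) -/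
open MeasureTheory ENNReal

/-- The Radon–Nikodym derivative (density w.r.t. Lebesgue measure) of a composed
stochastic process is the composition of the conditional likelihoods: semifunctoriality
of `RN_μ`. -/
theorem density_of_composed_process
    {Ωm Ωn : Type*} [MeasurableSpace Ωm] [MeasurableSpace Ωn]
    (μm : Measure Ωm) (μn : Measure Ωn)
    [IsProbabilityMeasure μm] [IsProbabilityMeasure μn]
    {a b c : ℕ}
    (f : Ωn × (Fin a → ℝ) → (Fin b → ℝ)) (hf : Measurable f)
    (f' : Ωm × (Fin b → ℝ) → (Fin c → ℝ)) (hf' : Measurable f')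
    (x : Fin a → ℝ)
    (L : (Fin b → ℝ) → ℝ≥0∞) (hL : Measurable L)
    (hLf : Measure.map (fun ω => f (ω, x)) μn
      = (volume : Measure (Fin b → ℝ)).withDensity L)
    (L' : (Fin b → ℝ) × (Fin c → ℝ) → ℝ≥0∞) (hL' : Measurable L')
    (hL'f : ∀ xb : Fin b → ℝ,
      Measure.map (fun ω => f' (ω, xb)) μm
        = (volume : Measure (Fin c → ℝ)).withDensity (fun xc => L' (xb, xc))) :
    Measure.map (fun p : Ωm × Ωn => f' (p.1, f (p.2, x))) (μm.prod μn)
      = (volume : Measure (Fin c → ℝ)).withDensity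
          (fun xc => ∫⁻ xb, L' (xb, xc) * L xb ∂(volume : Measure (Fin b → ℝ))) := by
  have hfx : Measurable (fun ω : Ωn => f (ω, x)) :=
    hf.comp (measurable_id.prodMk measurable_const)
  have hg : Measurable (fun p : Ωm × Ωn => f' (p.1, f (p.2, x))) :=
    hf'.comp (measurable_fst.prodMk (hfx.comp measurable_snd))
  ext s hs
  rw [Measure.map_apply hg hs, withDensity_apply _ hs,
    Measure.prod_apply_symm (hg hs)]
  have h2 : ∀ ωn : Ωn, μm ((fun ωm => (ωm, ωn)) ⁻¹'
        ((fun p : Ωm × Ωn => f' (p.1, f (p.2, x))) ⁻¹' s))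
      = ∫⁻ xc in s, L' (f (ωn, x), xc) := by
    intro ωn
    have hmeas : Measurable (fun ωm => f' (ωm, f (ωn, x))) :=
      hf'.comp (measurable_id.prodMk measurable_const)
    calc μm ((fun ωm => (ωm, ωn)) ⁻¹'
        ((fun p : Ωm × Ωn => f' (p.1, f (p.2, x))) ⁻¹' s))
        = μm ((fun ωm => f' (ωm, f (ωn, x))) ⁻¹' s) := rfl
      _ = (Measure.map (fun ωm => f' (ωm, f (ωn, x))) μm) s :=
          (Measure.map_apply hmeas hs).symm
      _ = ∫⁻ xc in s, L' (f (ωn, x), xc) := by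
          rw [hL'f (f (ωn, x)), withDensity_apply _ hs]
  simp_rw [h2]
  have hF : Measurable (fun xb : Fin b → ℝ => ∫⁻ xc in s, L' (xb, xc)) :=
    Measurable.lintegral_prod_right hL'
  calc ∫⁻ ωn, (∫⁻ xc in s, L' (f (ωn, x), xc)) ∂μn
      = ∫⁻ xb, (∫⁻ xc in s, L' (xb, xc)) ∂(Measure.map (fun ω => f (ω, x)) μn) :=
        (lintegral_map hF hfx).symm
    _ = ∫⁻ xb, (∫⁻ xc in s, L' (xb, xc)) * L xb := by
        rw [hLf, lintegral_withDensity_eq_lintegral_mul _ hL hF]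
        simp [mul_comm]
    _ = ∫⁻ xb, ∫⁻ xc in s, L' (xb, xc) * L xb := by
        congr 1; ext xb
        exact (lintegral_mul_const (L xb) (hL'.comp (measurable_const.prodMk measurable_id))).symm
    _ = ∫⁻ xc in s, ∫⁻ xb, L' (xb, xc) * L xb := by
        rw [lintegral_lintegral_swap]
        exact ((hL'.comp (measurable_fst.prodMk measurable_snd)).mul
          (hL.comp measurable_fst)).aemeasurable
end

section
/- The semicategory of conditional likelihoods has no identity morphisms on positive-dimensional objects: for every b ≥ 1 there is no Borel measurable function δ : ℝ^b × ℝ^b → ℝ such that for every Borel measurable, Lebesgue-integrable L : ℝ^b → ℝ and every x ∈ ℝ^b, ∫_{ℝ^b} δ(x, x') · L(x') dλ^b(x') = L(x). -/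
open MeasureTheory

/-! The indicator of a point is integrable with integral zero against any kernel once points are
null, as they are for Lebesgue measure in positive dimension; yet it takes the value `1` at that
point, so no kernel can reproduce it pointwise. -/

theorem exists_integrable_integral_mul_ne {α : Type*} [MeasurableSpace α]
    [MeasurableSingletonClass α] {μ : Measure α} {x : α} (hx : μ {x} = 0) (k : α → ℝ) :
    ∃ L : α → ℝ, Measurable L ∧ Integrable L μ ∧ ∫ y, k y * L y ∂μ ≠ L x := by
  have hnull : ({x} : Set α).indicator (1 : α → ℝ) =ᵐ[μ] 0 := indicator_meas_zero hx
  refine ⟨({x} : Set α).indicator 1, measurable_one.indicator (measurableSet_singleton x),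
    (integrable_congr hnull).mpr (integrable_zero _ _ _), ?_⟩
  have hzero : ∫ y, k y * ({x} : Set α).indicator 1 y ∂μ = 0 :=
    integral_eq_zero_of_ae <| hnull.mono fun y hy => by simp only [hy, Pi.zero_apply, mul_zero]
  simp [hzero]

/-- The semicategory of conditional likelihoods has no identity morphisms on
positive-dimensional objects: for `b ≥ 1` there is no measurable kernel
`δ : ℝ^b × ℝ^b → ℝ` reproducing every Borel measurable Lebesgue-integrable function
under integral composition. -/
theorem no_identity_likelihood_kernel {b : ℕ} (hb : 1 ≤ b) :
    ¬ ∃ δ : (Fin b → ℝ) × (Fin b → ℝ) → ℝ, Measurable δ ∧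
        ∀ L : (Fin b → ℝ) → ℝ, Measurable L →
          Integrable L (volume : Measure (Fin b → ℝ)) →
          ∀ x : Fin b → ℝ,
            (∫ x', δ (x, x') * L x' ∂(volume : Measure (Fin b → ℝ))) = L x := by
  rintro ⟨δ, -, hδ⟩
  have : Nonempty (Fin b) := ⟨⟨0, hb⟩⟩
  obtain ⟨L, hLm, hLi, hne⟩ :=
    exists_integrable_integral_mul_ne (measure_singleton (μ := volume) (0 : Fin b → ℝ))
      (fun x' => δ (0, x'))
  exact hne (hδ L hLm hLi 0)
end
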